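/- For all real p in [0,1] and all real λ > 0, it holds that 1 - (1-p)^λ ≥ λp / (1 + λp). -/
import Mathlib

theorem stmt_0 (p : ℝ) (hp0 : 0 ≤ p) (hp1 : p ≤ 1) (l : ℝ) (hl : 0 < l) :
    1 - (1 - p) ^ l ≥ l * p / (1 + l * p) := by
  have hpos : (0:ℝ) < 1 + l * p := by positivity
  have h1 : (1 - p) ^ l ≤ Real.exp (-(p * l)) := by
    calc (1 - p) ^ l ≤ Real.exp (-p) ^ l := by
          apply Real.rpow_le_rpow (by linarith) _ hl.le
          linarith [Real.add_one_le_exp (-p)]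
      _ = Real.exp (-p * l) := (Real.exp_mul _ _).symm
      _ = Real.exp (-(p * l)) := by ring_nf
  have h2 : Real.exp (-(p * l)) ≤ 1 / (1 + l * p) := by
    rw [Real.exp_neg, one_div]
    apply inv_anti₀ hpos
    nlinarith [Real.add_one_le_exp (p * l)]
  have h3 := mul_le_mul_of_nonneg_right (h1.trans h2) hpos.le
  rw [one_div, inv_mul_cancel₀ hpos.ne'] at h3
  rw [ge_iff_le, div_le_iff₀ hpos]
  nlinarith
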